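/- arXiv:1601.06873 — 2 statements merged into one kernel-verified Lean document; each statement's English description precedes it below -/
import Mathlib

section
/- Let G = (V, E, W) be a tree on N vertices with edge weights w_{ij} ∈ (-1,1) and Σ its normalized covariance matrix. Then the inverse U = Σ⁻¹ has entries: U_{ij} = -w_{ij}/(1 - w_{ij}²) if i ≠ j and e_{ij} ∈ E; U_{ij} = 0 if i ≠ j and e_{ij} ∉ E; and U_{ii} = 1 + Σ_{p : e_{ip} ∈ E} w_{ip}²/(1 - w_{ip}²). -/
/-!
Let `U` be the claimed inverse and `b` the neighbour of `i` on the tree path from `i` to `j`.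
Every other neighbour `p` of `i` reaches `j` through `i`, so `Σ p j = w_{ip} Σ i j`, and the
contributions of `p` to `(U Σ) i j` through `U i p` and through `U i i` cancel. What is left is
`Σ i j` plus, when `i ≠ j`, the contribution of `b`, which equals `-Σ i j` because
`Σ i j = w_{ib} Σ b j`. Hence `U Σ = 1`.
-/

open SimpleGraph Finset

namespace SimpleGraph

variable {V : Type*} (G : SimpleGraph V)

def IsPathProductMatrix {M : Type*} [Monoid M] (w : Sym2 V → M) (S : Matrix V V M) : Prop :=
  ∀ (i j : V) (p : G.Walk i j), p.IsPath → S i j = (p.edges.map w).prod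

namespace IsPathProductMatrix

variable {G} {M : Type*} [Monoid M] {w : Sym2 V → M} {S : Matrix V V M}

lemma apply_self (hS : G.IsPathProductMatrix w S) (i : V) : S i i = 1 := by
  simpa using hS i i .nil .nil

lemma apply_of_isPath_cons (hS : G.IsPathProductMatrix w S) {i k j : V} (h : G.Adj i k)
    {q : G.Walk k j} (hq : (Walk.cons h q).IsPath) : S i j = w s(i, k) * S k j := by
  rw [hS _ _ _ hq, hS _ _ _ hq.of_cons]
  simp

end IsPathProductMatrix

variable [Fintype V] [DecidableEq V] [DecidableRel G.Adj] {K : Type*} [Field K]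

def treePrecisionMatrix (w : Sym2 V → K) : Matrix V V K :=
  Matrix.of fun i j =>
    if i = j then 1 + ∑ p ∈ G.neighborFinset i, w s(i, p) ^ 2 / (1 - w s(i, p) ^ 2)
    else if G.Adj i j then -w s(i, j) / (1 - w s(i, j) ^ 2) else 0

variable {G}

lemma treePrecisionMatrix_apply_self (w : Sym2 V → K) (i : V) :
    G.treePrecisionMatrix w i i =
      1 + ∑ p ∈ G.neighborFinset i, w s(i, p) ^ 2 / (1 - w s(i, p) ^ 2) := by
  simp [treePrecisionMatrix]

lemma treePrecisionMatrix_apply_of_adj (w : Sym2 V → K) {i j : V} (h : G.Adj i j) :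
    G.treePrecisionMatrix w i j = -w s(i, j) / (1 - w s(i, j) ^ 2) := by
  simp [treePrecisionMatrix, h, h.ne]

lemma treePrecisionMatrix_apply_of_ne_of_not_adj (w : Sym2 V → K) {i j : V} (hij : i ≠ j)
    (h : ¬G.Adj i j) : G.treePrecisionMatrix w i j = 0 := by
  simp [treePrecisionMatrix, h, hij]

lemma treePrecisionMatrix_mul_apply (w : Sym2 V → K) (S : Matrix V V K) (i j : V) :
    (G.treePrecisionMatrix w * S) i j = S i j + ∑ p ∈ G.neighborFinset i,
      (w s(i, p) ^ 2 * S i j - w s(i, p) * S p j) / (1 - w s(i, p) ^ 2) := by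
  have hsupp : ∀ k ∉ insert i (G.neighborFinset i),
      G.treePrecisionMatrix w i k * S k j = 0 := by
    intro k hk
    rw [mem_insert, not_or, mem_neighborFinset] at hk
    rw [treePrecisionMatrix_apply_of_ne_of_not_adj w (Ne.symm hk.1) hk.2, zero_mul]
  rw [Matrix.mul_apply, ← sum_subset (subset_univ _) fun k _ hk => hsupp k hk,
    sum_insert (by simp), sum_congr rfl fun p hp => by
      rw [treePrecisionMatrix_apply_of_adj w ((mem_neighborFinset _ _ _).1 hp)],
    treePrecisionMatrix_apply_self]
  simp only [add_mul, one_mul, sum_mul, sub_div, sum_sub_distrib, neg_div, neg_mul,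
    sum_neg_distrib, mul_div_right_comm]
  ring

lemma treePrecisionMatrix_mul_eq_one (hG : G.IsTree) {w : Sym2 V → K}
    (hw : ∀ e ∈ G.edgeSet, 1 - w e ^ 2 ≠ 0) {S : Matrix V V K}
    (hS : G.IsPathProductMatrix w S) :
    G.treePrecisionMatrix w * S = 1 := by
  ext i j
  obtain ⟨P, hP, -⟩ := hG.existsUnique_path i j
  have haway : ∀ p ∈ G.neighborFinset i, p ∉ P.support →
      (w s(i, p) ^ 2 * S i j - w s(i, p) * S p j) / (1 - w s(i, p) ^ 2) = 0 := by
    intro p hp hpP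
    rw [mem_neighborFinset] at hp
    rw [hS.apply_of_isPath_cons hp.symm (hP.cons hpP), Sym2.eq_swap]
    ring
  rw [treePrecisionMatrix_mul_apply, Matrix.one_apply]
  cases P with
  | nil =>
    rw [sum_eq_zero fun p hp => haway p hp ?_, hS.apply_self]
    · simp
    · simpa using ((mem_neighborFinset _ _ _).1 hp).ne'
  | @cons _ b _ h q =>
    have hij : i ≠ j := fun hij => ((Walk.cons_isPath_iff _ _).1 hP).2 (hij ▸ q.end_mem_support)
    have htoward : S i j = w s(i, b) * S b j := hS.apply_of_isPath_cons h hP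
    have hb : 1 - w s(i, b) ^ 2 ≠ 0 := hw _ h
    have hothers : ∀ p ∈ G.neighborFinset i, p ≠ b →
        (w s(i, p) ^ 2 * S i j - w s(i, p) * S p j) / (1 - w s(i, p) ^ 2) = 0 := by
      intro p hp hpb
      refine haway p hp fun hmem => hpb ?_
      simpa using hG.isAcyclic.eq_snd_of_adj_start hP ((mem_neighborFinset _ _ _).1 hp) hmem
    rw [sum_eq_single_of_mem b ((mem_neighborFinset _ _ _).2 h) hothers, if_neg hij, htoward]
    field_simp
    ring

end SimpleGraph

/-- The inverse of the normalized covariance matrix of a Gaussian tree is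
sparse: off-diagonal entries are `-w/(1-w²)` on tree edges and `0` otherwise,
and the diagonal entries are `1 + Σ_{p : e_{ip} ∈ E} w_{ip}²/(1-w_{ip}²)`. -/
theorem stmt_5 (N : ℕ) (G : SimpleGraph (Fin N)) (hG : G.IsTree)
    [DecidableRel G.Adj]
    (w : Sym2 (Fin N) → ℝ) (hw : ∀ e ∈ G.edgeSet, |w e| < 1)
    (S : Matrix (Fin N) (Fin N) ℝ)
    (hS : ∀ (i j : Fin N) (p : G.Walk i j), p.IsPath →
      S i j = (p.edges.map w).prod) :
    (∀ i j : Fin N, i ≠ j → G.Adj i j →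
        S⁻¹ i j = -(w s(i, j)) / (1 - w s(i, j) ^ 2)) ∧
    (∀ i j : Fin N, i ≠ j → ¬ G.Adj i j → S⁻¹ i j = 0) ∧
    (∀ i : Fin N, S⁻¹ i i =
        1 + ∑ p ∈ univ.filter (fun p => G.Adj i p),
              w s(i, p) ^ 2 / (1 - w s(i, p) ^ 2)) := by
  have hw' : ∀ e ∈ G.edgeSet, 1 - w e ^ 2 ≠ 0 := fun e he =>
    (sub_pos.2 ((sq_lt_one_iff_abs_lt_one _).2 (hw e he))).ne'
  rw [Matrix.inv_eq_left_inv (treePrecisionMatrix_mul_eq_one hG hw' hS)]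
  exact ⟨fun i j _ hadj => treePrecisionMatrix_apply_of_adj w hadj,
    fun i j hij hnadj => treePrecisionMatrix_apply_of_ne_of_not_adj w hij hnadj,
    fun i => by rw [treePrecisionMatrix_apply_self, neighborFinset_eq_filter]⟩
end

section
/- For the two 3-node trees above, the vector α₁ = [s₁, s₂, 1] with s₁ = −(w₂ + √β)/2, s₂ = −(w₂ − √β)/2, β = w₂² + 2(1−w₂²)/(1−w₁), satisfies (α₁ᵀΣ₁α₁)/(α₁ᵀΣ₂α₁) = λ_max = (√β + w₂)/(√β − w₂), and the vector α₂ = [s₂, s₁, 1] satisfies (α₂ᵀΣ₁α₂)/(α₂ᵀΣ₂α₂) = 1/λ_max. -/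
open Matrix

/-!
Both quadratic forms are explicit quadratics in `α = [x, y, 1]`, and exchanging `x` and `y` turns
the form of `Σ₁` into that of `Σ₂`; hence the ratio at `α₂` is the reciprocal of the ratio at
`α₁`. Writing `r = √β`, the relation `(1 - w₁) r² = (1 - w₁) w₂² + 2 (1 - w₂²)` collapses the
two forms at `α₁` to `(1 - w₁) r (r + w₂)` and `(1 - w₁) r (r - w₂)`.
-/

section TreeCovariance

variable (w1 w2 : ℝ)

/-- `Σ₁`: covariance of the Gaussian tree `1 – 2 – 3` with edge correlations `w₁` and `w₂`. -/
def treeCov₁ : Matrix (Fin 3) (Fin 3) ℝ := !![1, w1, w1 * w2; w1, 1, w2; w1 * w2, w2, 1]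

/-- `Σ₂`: covariance of the Gaussian tree `2 – 1 – 3` with edge correlations `w₁` and `w₂`. -/
def treeCov₂ : Matrix (Fin 3) (Fin 3) ℝ := !![1, w1, w2; w1, 1, w1 * w2; w2, w1 * w2, 1]

theorem dotProduct_treeCov₁_mulVec (x y : ℝ) :
    ![x, y, 1] ⬝ᵥ (treeCov₁ w1 w2 *ᵥ ![x, y, 1])
      = x ^ 2 + y ^ 2 + 1 + 2 * w1 * x * y + 2 * w2 * (w1 * x + y) := by
  simp only [treeCov₁, dotProduct, mulVec, of_apply, cons_val', cons_val_fin_one,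
    Fin.sum_univ_three, cons_val_zero, cons_val_one, cons_val]
  ring

theorem dotProduct_treeCov₂_mulVec (x y : ℝ) :
    ![x, y, 1] ⬝ᵥ (treeCov₂ w1 w2 *ᵥ ![x, y, 1])
      = x ^ 2 + y ^ 2 + 1 + 2 * w1 * x * y + 2 * w2 * (x + w1 * y) := by
  simp only [treeCov₂, dotProduct, mulVec, of_apply, cons_val', cons_val_fin_one,
    Fin.sum_univ_three, cons_val_zero, cons_val_one, cons_val]
  ring

theorem dotProduct_treeCov₁_mulVec_swap (x y : ℝ) :
    ![y, x, 1] ⬝ᵥ (treeCov₁ w1 w2 *ᵥ ![y, x, 1]) = ![x, y, 1] ⬝ᵥ (treeCov₂ w1 w2 *ᵥ ![x, y, 1]) := by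
  rw [dotProduct_treeCov₁_mulVec, dotProduct_treeCov₂_mulVec]
  ring

variable {w1 w2}

theorem beta_pos (hw1 : w1 < 1) (hw2 : w2 ^ 2 < 1) : 0 < w2 ^ 2 + 2 * (1 - w2 ^ 2) / (1 - w1) := by
  have : 0 < 2 * (1 - w2 ^ 2) / (1 - w1) := div_pos (by linarith) (by linarith)
  positivity

variable {r : ℝ} (hr : (1 - w1) * r ^ 2 = (1 - w1) * w2 ^ 2 + 2 * (1 - w2 ^ 2))
include hr

theorem dotProduct_treeCov₁_mulVec_extremal :
    ![-(w2 + r) / 2, -(w2 - r) / 2, 1] ⬝ᵥ (treeCov₁ w1 w2 *ᵥ ![-(w2 + r) / 2, -(w2 - r) / 2, 1])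
      = (1 - w1) * r * (r + w2) := by
  rw [dotProduct_treeCov₁_mulVec]
  linear_combination (-1 / 2) * hr

theorem dotProduct_treeCov₂_mulVec_extremal :
    ![-(w2 + r) / 2, -(w2 - r) / 2, 1] ⬝ᵥ (treeCov₂ w1 w2 *ᵥ ![-(w2 + r) / 2, -(w2 - r) / 2, 1])
      = (1 - w1) * r * (r - w2) := by
  rw [dotProduct_treeCov₂_mulVec]
  linear_combination (-1 / 2) * hr

end TreeCovariance

theorem stmt_13_general (w1 w2 : ℝ) (hw1 : |w1| < 1) (hw2' : |w2| < 1) :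
    let S1 : Matrix (Fin 3) (Fin 3) ℝ := !![(1:ℝ), w1, w1*w2; w1, 1, w2; w1*w2, w2, 1]
    let S2 : Matrix (Fin 3) (Fin 3) ℝ := !![(1:ℝ), w1, w2; w1, 1, w1*w2; w2, w1*w2, 1]
    let b : ℝ := w2^2 + 2*(1 - w2^2)/(1 - w1)
    let s1 : ℝ := -(w2 + Real.sqrt b)/2
    let s2 : ℝ := -(w2 - Real.sqrt b)/2
    let lmax : ℝ := (Real.sqrt b + w2) / (Real.sqrt b - w2)
    let a1 : Fin 3 → ℝ := ![s1, s2, 1]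
    let a2 : Fin 3 → ℝ := ![s2, s1, 1]
    (a1 ⬝ᵥ (S1 *ᵥ a1)) / (a1 ⬝ᵥ (S2 *ᵥ a1)) = lmax ∧
    (a2 ⬝ᵥ (S1 *ᵥ a2)) / (a2 ⬝ᵥ (S2 *ᵥ a2)) = 1 / lmax := by
  intro S1 S2 b s1 s2 lmax a1 a2
  have hw1lt : w1 < 1 := (abs_lt.mp hw1).2
  have hb : 0 < b := beta_pos hw1lt (sq_lt_one_iff_abs_lt_one w2 |>.mpr hw2')
  have hr : (1 - w1) * √b ^ 2 = (1 - w1) * w2 ^ 2 + 2 * (1 - w2 ^ 2) := by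
    rw [Real.sq_sqrt hb.le]
    simp only [b]
    field_simp [sub_ne_zero.mpr hw1lt.ne']
  have hscale : (1 - w1) * √b ≠ 0 :=
    mul_ne_zero (sub_ne_zero.mpr hw1lt.ne') (Real.sqrt_pos.mpr hb).ne'
  have hQ₁ : a1 ⬝ᵥ (S1 *ᵥ a1) = (1 - w1) * √b * (√b + w2) :=
    dotProduct_treeCov₁_mulVec_extremal hr
  have hQ₂ : a1 ⬝ᵥ (S2 *ᵥ a1) = (1 - w1) * √b * (√b - w2) :=
    dotProduct_treeCov₂_mulVec_extremal hr
  have hratio : a1 ⬝ᵥ (S1 *ᵥ a1) / a1 ⬝ᵥ (S2 *ᵥ a1) = lmax := by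
    rw [hQ₁, hQ₂, mul_div_mul_left _ _ hscale]
  refine ⟨hratio, ?_⟩
  rw [← hratio, one_div_div]
  exact congrArg₂ (· / ·) (dotProduct_treeCov₁_mulVec_swap w1 w2 s1 s2)
    (dotProduct_treeCov₁_mulVec_swap w1 w2 s2 s1).symm

/-- The vectors `α₁ = [s₁,s₂,1]` and `α₂ = [s₂,s₁,1]`, with
`s₁ = -(w₂+√β)/2`, `s₂ = -(w₂-√β)/2`, `β = w₂² + 2(1-w₂²)/(1-w₁)`, achieve the
extreme values `λ_max` and `1/λ_max` of the Rayleigh ratio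
`αᵀΣ₁α / αᵀΣ₂α` for the two 3-node Gaussian tree covariances. -/
theorem stmt_13 (w1 w2 : ℝ) (hw1 : |w1| < 1) (hw2 : 0 < |w2|) (hw2' : |w2| < 1)
    (hw1ne : w1 ≠ 1) :
    let S1 : Matrix (Fin 3) (Fin 3) ℝ := !![(1:ℝ), w1, w1*w2; w1, 1, w2; w1*w2, w2, 1]
    let S2 : Matrix (Fin 3) (Fin 3) ℝ := !![(1:ℝ), w1, w2; w1, 1, w1*w2; w2, w1*w2, 1]
    let b : ℝ := w2^2 + 2*(1 - w2^2)/(1 - w1)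
    let s1 : ℝ := -(w2 + Real.sqrt b)/2
    let s2 : ℝ := -(w2 - Real.sqrt b)/2
    let lmax : ℝ := (Real.sqrt b + w2) / (Real.sqrt b - w2)
    let a1 : Fin 3 → ℝ := ![s1, s2, 1]
    let a2 : Fin 3 → ℝ := ![s2, s1, 1]
    (a1 ⬝ᵥ (S1 *ᵥ a1)) / (a1 ⬝ᵥ (S2 *ᵥ a1)) = lmax ∧
    (a2 ⬝ᵥ (S1 *ᵥ a2)) / (a2 ⬝ᵥ (S2 *ᵥ a2)) = 1 / lmax :=
  stmt_13_general w1 w2 hw1 hw2'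
end
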